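/- arXiv:0710.4317 — 7 statements merged into one kernel-verified Lean document; each statement's English description precedes it below -/
import Mathlib

section
/- For any smooth 2π-periodic function φ: ℝ → ℝ, the integral over [0,2π] of (16φ''''(θ) + 40φ''(θ) + 9φ(θ)) · ((2/3)φ'(θ)cos θ + φ(θ)sin θ) dθ equals 0. -/
open Real intervalIntegral

theorem stmt0 (φ : ℝ → ℝ) (hφ : ContDiff ℝ (⊤ : ℕ∞) φ)
    (hper : Function.Periodic φ (2 * Real.pi)) :
    ∫ θ in (0:ℝ)..(2 * Real.pi),
      (16 * iteratedDeriv 4 φ θ + 40 * iteratedDeriv 2 φ θ + 9 * φ θ) *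
        ((2/3) * deriv φ θ * Real.cos θ + φ θ * Real.sin θ) = 0 := by
  have hC : ∀ n : ℕ, Differentiable ℝ (iteratedDeriv n φ) := fun n =>
    hφ.differentiable_iteratedDeriv n (by exact_mod_cast lt_top_iff_ne_top.mpr (by simp))
  have hD : ∀ (n : ℕ) (θ : ℝ),
      HasDerivAt (iteratedDeriv n φ) (iteratedDeriv (n + 1) φ θ) θ := by
    intro n θ
    simpa [iteratedDeriv_succ] using ((hC n) θ).hasDerivAt
  have hpern : ∀ n, Function.Periodic (iteratedDeriv n φ) (2 * Real.pi) := by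
    intro n
    induction n with
    | zero => simpa using hper
    | succ n ih =>
      rw [iteratedDeriv_succ]
      intro x
      have h1 : deriv (fun y => iteratedDeriv n φ (y + 2 * Real.pi)) x
          = deriv (iteratedDeriv n φ) x := by
        congr 1
        ext y
        exact ih y
      have h2 : deriv (fun y => iteratedDeriv n φ (y + 2 * Real.pi)) x
          = deriv (iteratedDeriv n φ) (x + 2 * Real.pi) := by
        have hc : HasDerivAt (fun y => iteratedDeriv n φ (y + 2 * Real.pi))
            (iteratedDeriv (n + 1) φ (x + 2 * Real.pi)) x := by
          exact (HasDerivAt.comp x (hD n (x + 2 * Real.pi))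
            ((hasDerivAt_id x).add_const (2 * Real.pi))).congr_deriv (mul_one _)
        rw [hc.deriv, (hD n (x + 2 * Real.pi)).deriv]
      rw [← h2, h1]
  -- antiderivative
  set f0 := iteratedDeriv 0 φ with hf0
  set F : ℝ → ℝ := fun θ =>
    -9 * φ θ * φ θ * Real.cos θ + 24 * iteratedDeriv 1 φ θ * φ θ * Real.sin θ
      + 24 * iteratedDeriv 1 φ θ * iteratedDeriv 1 φ θ * Real.cos θ
      - 16 * iteratedDeriv 2 φ θ * φ θ * Real.cos θ
      - (16/3) * iteratedDeriv 2 φ θ * iteratedDeriv 1 φ θ * Real.sin θ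
      - (16/3) * iteratedDeriv 2 φ θ * iteratedDeriv 2 φ θ * Real.cos θ
      + 16 * iteratedDeriv 3 φ θ * φ θ * Real.sin θ
      + (32/3) * iteratedDeriv 3 φ θ * iteratedDeriv 1 φ θ * Real.cos θ
    with hF
  have hφD : ∀ θ : ℝ, HasDerivAt φ (iteratedDeriv 1 φ θ) θ := by
    intro θ
    simpa using hD 0 θ
  have hFD : ∀ θ : ℝ, HasDerivAt F
      ((16 * iteratedDeriv 4 φ θ + 40 * iteratedDeriv 2 φ θ + 9 * φ θ) *
        ((2/3) * iteratedDeriv 1 φ θ * Real.cos θ + φ θ * Real.sin θ)) θ := by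
    intro θ
    have h := ((((((((((hφD θ).const_mul (-9 : ℝ)).mul (hφD θ)).mul
        (Real.hasDerivAt_cos θ)).add
      ((((hD 1 θ).const_mul (24 : ℝ)).mul (hφD θ)).mul (Real.hasDerivAt_sin θ))).add
      ((((hD 1 θ).const_mul (24 : ℝ)).mul (hD 1 θ)).mul (Real.hasDerivAt_cos θ))).sub
      ((((hD 2 θ).const_mul (16 : ℝ)).mul (hφD θ)).mul (Real.hasDerivAt_cos θ))).sub
      ((((hD 2 θ).const_mul ((16:ℝ)/3)).mul (hD 1 θ)).mul (Real.hasDerivAt_sin θ))).sub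
      ((((hD 2 θ).const_mul ((16:ℝ)/3)).mul (hD 2 θ)).mul (Real.hasDerivAt_cos θ))).add
      ((((hD 3 θ).const_mul (16 : ℝ)).mul (hφD θ)).mul (Real.hasDerivAt_sin θ))).add
      ((((hD 3 θ).const_mul ((32:ℝ)/3)).mul (hD 1 θ)).mul (Real.hasDerivAt_cos θ))
    refine h.congr_deriv ?_
    have e2 : iteratedDeriv 2 φ θ = iteratedDeriv 2 φ θ := rfl
    have h12 : iteratedDeriv (1 + 1) φ θ = iteratedDeriv 2 φ θ := by norm_num
    have h23 : iteratedDeriv (2 + 1) φ θ = iteratedDeriv 3 φ θ := by norm_num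
    have h34 : iteratedDeriv (3 + 1) φ θ = iteratedDeriv 4 φ θ := by norm_num
    rw [h12, h23, h34] at *
    simp only [Pi.mul_apply]
    ring
  have hcont : Continuous fun θ =>
      (16 * iteratedDeriv 4 φ θ + 40 * iteratedDeriv 2 φ θ + 9 * φ θ) *
        ((2/3) * iteratedDeriv 1 φ θ * Real.cos θ + φ θ * Real.sin θ) := by
    have c0 : Continuous φ := hφ.continuous
    have c1 := (hC 1).continuous
    have c2 := (hC 2).continuous
    have c4 := (hC 4).continuous
    clear hD hpern hφ
    fun_prop
  have key : ∫ θ in (0:ℝ)..(2 * Real.pi),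
      (16 * iteratedDeriv 4 φ θ + 40 * iteratedDeriv 2 φ θ + 9 * φ θ) *
        ((2/3) * iteratedDeriv 1 φ θ * Real.cos θ + φ θ * Real.sin θ)
      = F (2 * Real.pi) - F 0 := by
    exact intervalIntegral.integral_eq_sub_of_hasDerivAt (fun θ _ => hFD θ)
      (hcont.intervalIntegrable 0 (2 * Real.pi))
  have hFper : F (2 * Real.pi) = F 0 := by
    have p0 : φ (2 * Real.pi) = φ 0 := by simpa using hper 0
    have p1 : iteratedDeriv 1 φ (2 * Real.pi) = iteratedDeriv 1 φ 0 := by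
      simpa using hpern 1 0
    have p2 : iteratedDeriv 2 φ (2 * Real.pi) = iteratedDeriv 2 φ 0 := by
      simpa using hpern 2 0
    have p3 : iteratedDeriv 3 φ (2 * Real.pi) = iteratedDeriv 3 φ 0 := by
      simpa using hpern 3 0
    have p1' : deriv φ (2 * Real.pi) = deriv φ 0 := by
      simpa [iteratedDeriv_one] using p1
    simp [hF, p0, p1, p1', p2, p3, Real.sin_two_pi, Real.cos_two_pi]
  have hgeq : ∀ θ : ℝ, deriv φ θ = iteratedDeriv 1 φ θ := by
    intro θ; rw [iteratedDeriv_one]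
  calc ∫ θ in (0:ℝ)..(2 * Real.pi),
      (16 * iteratedDeriv 4 φ θ + 40 * iteratedDeriv 2 φ θ + 9 * φ θ) *
        ((2/3) * deriv φ θ * Real.cos θ + φ θ * Real.sin θ)
      = ∫ θ in (0:ℝ)..(2 * Real.pi),
      (16 * iteratedDeriv 4 φ θ + 40 * iteratedDeriv 2 φ θ + 9 * φ θ) *
        ((2/3) * iteratedDeriv 1 φ θ * Real.cos θ + φ θ * Real.sin θ) := by
        simp only [hgeq]
    _ = F (2 * Real.pi) - F 0 := key
    _ = 0 := by rw [hFper]; ring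
end

section
/- For any smooth 2π-periodic function φ: ℝ → ℝ, the integral over [0,2π] of (φ''''(θ) + 10φ''(θ) + 9φ(θ)) · ((1/3)φ'(θ)cos(2θ) + φ(θ)sin(2θ)) dθ equals 0. -/
open Real intervalIntegral

private lemma periodic_deriv' {f : ℝ → ℝ} {c : ℝ} (h : Function.Periodic f c) :
    Function.Periodic (deriv f) c := by
  intro x
  have h1 : (fun y : ℝ => f (y + c)) = f := funext fun y => h y
  calc deriv f (x + c) = deriv (fun y => f (y + c)) x := (deriv_comp_add_const f c x).symm
    _ = deriv f x := by rw [h1]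

theorem stmt1 (φ : ℝ → ℝ) (hφ : ContDiff ℝ (⊤ : ℕ∞) φ)
    (hper : Function.Periodic φ (2 * Real.pi)) :
    ∫ θ in (0:ℝ)..(2 * Real.pi),
      (iteratedDeriv 4 φ θ + 10 * iteratedDeriv 2 φ θ + 9 * φ θ) *
        ((1/3) * deriv φ θ * Real.cos (2 * θ) + φ θ * Real.sin (2 * θ)) = 0 := by
  have hinf : ContDiff ℝ (⊤ : ℕ∞) φ := hφ.of_le (by simp)
  set g : ℕ → ℝ → ℝ := fun n => iteratedDeriv n φ with hg_def
  have hg : ∀ n, ContDiff ℝ (⊤ : ℕ∞) (g n) := by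
    intro n
    simpa [hg_def, iteratedDeriv_eq_iterate] using hinf.iterate_deriv n
  have hgd : ∀ n x, HasDerivAt (g n) (g (n + 1) x) x := by
    intro n x
    have hd : DifferentiableAt ℝ (g n) x :=
      ((hg n).differentiable (by simp)).differentiableAt
    have := hd.hasDerivAt
    rwa [show g (n + 1) = deriv (g n) from iteratedDeriv_succ]
  have hgper : ∀ n, Function.Periodic (g n) (2 * Real.pi) := by
    intro n
    induction n with
    | zero => simpa [hg_def] using hper
    | succ k ih =>
      have : g (k + 1) = deriv (g k) := iteratedDeriv_succ
      rw [this]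
      exact periodic_deriv' ih
  -- antiderivative
  set F : ℝ → ℝ := fun θ =>
    (-(9/2) * g 0 θ ^ 2 - 2 * (g 0 θ * g 2 θ) + 3 * g 1 θ ^ 2 + 1/3 * (g 1 θ * g 3 θ)
        - 1/6 * g 2 θ ^ 2) * Real.cos (2 * θ)
      + (6 * g 0 θ * g 1 θ + g 0 θ * g 3 θ - 1/3 * g 1 θ * g 2 θ) * Real.sin (2 * θ)
    with hF_def
  have hF : ∀ θ : ℝ, HasDerivAt F
      ((g 4 θ + 10 * g 2 θ + 9 * g 0 θ) *
        ((1/3) * g 1 θ * Real.cos (2 * θ) + g 0 θ * Real.sin (2 * θ))) θ := by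
    intro θ
    have hc : HasDerivAt (fun t : ℝ => Real.cos (2 * t)) (-Real.sin (2 * θ) * 2) θ := by
      simpa [Function.comp_def] using (Real.hasDerivAt_cos (2 * θ)).comp θ ((hasDerivAt_id θ).const_mul 2)
    have hs : HasDerivAt (fun t : ℝ => Real.sin (2 * t)) (Real.cos (2 * θ) * 2) θ := by
      simpa [Function.comp_def] using (Real.hasDerivAt_sin (2 * θ)).comp θ ((hasDerivAt_id θ).const_mul 2)
    have h0 := hgd 0 θ
    have h1 := hgd 1 θ
    have h2 := hgd 2 θ
    have h3 := hgd 3 θ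
    have hA := (((((h0.pow 2).const_mul (-(9/2:ℝ))).sub ((h0.mul h2).const_mul 2)).add
        ((h1.pow 2).const_mul 3)).add ((h1.mul h3).const_mul (1/3))).sub
        ((h2.pow 2).const_mul (1/6))
    have hB := (((h0.const_mul 6).mul h1).add (h0.mul h3)).sub ((h1.const_mul (1/3)).mul h2)
    have hFD := (hA.mul hc).add (hB.mul hs)
    convert (show HasDerivAt F _ θ from hFD) using 1
    norm_num
    ring
  have hcont : Continuous (fun θ =>
      (g 4 θ + 10 * g 2 θ + 9 * g 0 θ) *
        ((1/3) * g 1 θ * Real.cos (2 * θ) + g 0 θ * Real.sin (2 * θ))) := by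
    have c4 := (hg 4).continuous
    have c2 := (hg 2).continuous
    have c1 := (hg 1).continuous
    have c0 := (hg 0).continuous
    fun_prop
  have key : (∫ θ in (0:ℝ)..(2 * Real.pi),
      (g 4 θ + 10 * g 2 θ + 9 * g 0 θ) *
        ((1/3) * g 1 θ * Real.cos (2 * θ) + g 0 θ * Real.sin (2 * θ))) = F (2 * Real.pi) - F 0 :=
    intervalIntegral.integral_eq_sub_of_hasDerivAt (fun x _ => hF x)
      (hcont.intervalIntegrable _ _)
  have hpervals : ∀ n, g n (2 * Real.pi) = g n 0 := by
    intro n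
    have := hgper n 0
    simpa using this
  have hFper : F (2 * Real.pi) = F 0 := by
    have hcos : Real.cos (2 * (2 * Real.pi)) = Real.cos (2 * 0) := by
      rw [show (2 : ℝ) * (2 * Real.pi) = 2 * Real.pi + 2 * Real.pi by ring,
        Real.cos_add_two_pi]
      norm_num [Real.cos_two_pi]
    have hsin : Real.sin (2 * (2 * Real.pi)) = Real.sin (2 * 0) := by
      rw [show (2 : ℝ) * (2 * Real.pi) = 2 * Real.pi + 2 * Real.pi by ring,
        Real.sin_add_two_pi]
      norm_num [Real.sin_two_pi]
    simp only [hF_def]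
    rw [hcos, hsin, hpervals 0, hpervals 1, hpervals 2, hpervals 3]
  have hgoal : (fun θ => (iteratedDeriv 4 φ θ + 10 * iteratedDeriv 2 φ θ + 9 * φ θ) *
        ((1/3) * deriv φ θ * Real.cos (2 * θ) + φ θ * Real.sin (2 * θ)))
      = fun θ => (g 4 θ + 10 * g 2 θ + 9 * g 0 θ) *
        ((1/3) * g 1 θ * Real.cos (2 * θ) + g 0 θ * Real.sin (2 * θ)) := by
    funext θ
    simp [hg_def, iteratedDeriv_one]
  rw [show (∫ θ in (0:ℝ)..(2 * Real.pi),
      (iteratedDeriv 4 φ θ + 10 * iteratedDeriv 2 φ θ + 9 * φ θ) *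
        ((1/3) * deriv φ θ * Real.cos (2 * θ) + φ θ * Real.sin (2 * θ)))
      = ∫ θ in (0:ℝ)..(2 * Real.pi),
      (g 4 θ + 10 * g 2 θ + 9 * g 0 θ) *
        ((1/3) * g 1 θ * Real.cos (2 * θ) + g 0 θ * Real.sin (2 * θ)) from by rw [hgoal],
    key, hFper, sub_self]
end

section
/- For every integer k ≥ 2, the quantity k⁴ - (5/2)k² + 9/16 is strictly positive; consequently, for an H² function u on S¹ with vanishing first Fourier mode, ∫₀^{2π}(u_{θθ}² - (5/2)u_θ² + (9/16)u²)dθ ≥ C ∫₀^{2π}(u_{θθ}² + u²)dθ for some absolute constant C > 0. -/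
/-!
Let `c n` be the Fourier coefficients of `u` on `[0, 2π]`. The orthogonality hypotheses say
`c 1 = c (-1) = 0`, and the coefficients of `u'` and `u''` are `i n c n` and `(i n)² c n`.
Since `4 n² ≤ n⁴` for every integer `n ≠ ±1`, Parseval gives `4 ∫ u'² ≤ ∫ u''²`. The integrand
minus `3/8 (u''² + u²)` then integrates to `5/8 (∫ u''² - 4 ∫ u'²) + 3/16 ∫ u² ≥ 0`.
-/

open Real intervalIntegral
open MeasureTheory Set
open scoped Interval

lemma Function.Periodic.deriv {𝕜 F : Type*} [NontriviallyNormedField 𝕜] [NormedAddCommGroup F]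
    [NormedSpace 𝕜 F] {f : 𝕜 → F} {c : 𝕜} (hf : Function.Periodic f c) :
    Function.Periodic (deriv f) c := fun x => by
  rw [← deriv_comp_add_const, hf.funext]

lemma fourierCoeffOn_deriv {a b : ℝ} (hab : a < b) {f f' : ℝ → ℂ}
    (hf : ∀ x ∈ [[a, b]], HasDerivAt f (f' x) x) (hf' : IntervalIntegrable f' volume a b)
    (hfab : f a = f b) (n : ℤ) :
    fourierCoeffOn hab f' n = 2 * π * Complex.I * n / (b - a) * fourierCoeffOn hab f n := by
  rcases eq_or_ne n 0 with rfl | hn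
  · rw [fourierCoeffOn_eq_integral]
    simp [integral_eq_sub_of_hasDerivAt hf hf', hfab]
  · rw [fourierCoeffOn_of_hasDerivAt hab hn hf hf', hfab, sub_self, mul_zero, zero_sub]
    have : ((b : ℂ) - a) ≠ 0 := sub_ne_zero.2 (by exact_mod_cast hab.ne')
    field_simp

lemma hasSum_sq_fourierCoeffOn_ofReal {a b : ℝ} (hab : a < b) {v : ℝ → ℝ} (hv : Continuous v) :
    HasSum (fun n => ‖fourierCoeffOn hab (fun x => (v x : ℂ)) n‖ ^ 2)
      ((b - a)⁻¹ * ∫ x in a..b, v x ^ 2) := by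
  have hL2 : MemLp (fun x => (v x : ℂ)) 2 (volume.restrict (Ioc a b)) := by
    have hc : Continuous fun x => (v x : ℂ) := Complex.continuous_ofReal.comp hv
    refine (memLp_two_iff_integrable_sq_norm hc.aestronglyMeasurable).2 ?_
    exact ((hc.norm.pow 2).integrableOn_Icc).mono_set Ioc_subset_Icc_self
  simpa using hasSum_sq_fourierCoeffOn hab hL2

lemma fourierCoeffOn_ofReal {u : ℝ → ℝ} (hu : Continuous u) (n : ℤ) :
    fourierCoeffOn two_pi_pos (fun x => (u x : ℂ)) n =
      (2 * π)⁻¹ * ((∫ x in (0)..2 * π, u x * cos (n * x) : ℝ)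
        - (∫ x in (0)..2 * π, u x * sin (n * x) : ℝ) * Complex.I) := by
  have hexp : ∀ x : ℝ, fourier (-n) (x : AddCircle (2 * π - 0)) • (u x : ℂ) =
      ((u x * cos (n * x) : ℝ) : ℂ) - ((u x * sin (n * x) : ℝ) : ℂ) * Complex.I := by
    intro x
    rw [fourier_coe_apply, smul_eq_mul]
    have : 2 * π * Complex.I * ((-n : ℤ) : ℂ) * x / ((2 * π - 0 : ℝ) : ℂ) =
        -(n * x : ℝ) * Complex.I := by
      push_cast
      field_simp
      ring
    rw [this, Complex.exp_mul_I, Complex.cos_neg, Complex.sin_neg]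
    push_cast
    ring
  rw [fourierCoeffOn_eq_integral, integral_congr (fun x _ => hexp x)]
  have hcos : Continuous fun x : ℝ => ((u x * cos (n * x) : ℝ) : ℂ) := by fun_prop
  have hsin : Continuous fun x : ℝ => ((u x * sin (n * x) : ℝ) : ℂ) * Complex.I := by fun_prop
  rw [integral_sub (hcos.intervalIntegrable _ _) (hsin.intervalIntegrable _ _),
    intervalIntegral.integral_mul_const, integral_ofReal, integral_ofReal, sub_zero, one_div,
    Complex.real_smul]

lemma fourierCoeffOn_ofReal_deriv {f : ℝ → ℝ} (hf : ContDiff ℝ 1 f)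
    (hper : Function.Periodic f (2 * π)) (n : ℤ) :
    fourierCoeffOn two_pi_pos (fun x => ((deriv f x : ℝ) : ℂ)) n =
      Complex.I * n * fourierCoeffOn two_pi_pos (fun x => (f x : ℂ)) n := by
  have hderiv : ∀ x ∈ [[0, 2 * π]], HasDerivAt (fun x => (f x : ℂ)) ((deriv f x : ℝ) : ℂ) x :=
    fun x _ => ((hf.differentiable one_ne_zero).differentiableAt.hasDerivAt).ofReal_comp
  have hint : IntervalIntegrable (fun x => ((deriv f x : ℝ) : ℂ)) volume 0 (2 * π) :=
    (Complex.continuous_ofReal.comp (hf.continuous_deriv le_rfl)).intervalIntegrable _ _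
  rw [fourierCoeffOn_deriv two_pi_pos hderiv hint (by simpa using (hper 0).symm)]
  congr 1
  push_cast
  field_simp
  ring

lemma four_mul_sq_le_pow_four {n : ℤ} (h₁ : n ≠ 1) (h₂ : n ≠ -1) : 4 * (n : ℝ) ^ 2 ≤ n ^ 4 := by
  rcases eq_or_ne n 0 with rfl | h₀
  · simp
  · have h₄ : (4 : ℝ) ≤ n ^ 2 := by
      have : 4 ≤ n ^ 2 := by rcases (by omega : 2 ≤ n ∨ n ≤ -2) with h | h <;> nlinarith
      exact_mod_cast this
    calc 4 * (n : ℝ) ^ 2 ≤ n ^ 2 * n ^ 2 := mul_le_mul_of_nonneg_right h₄ (sq_nonneg _)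
      _ = n ^ 4 := by ring

theorem four_mul_integral_deriv_sq_le {u : ℝ → ℝ} (hu : ContDiff ℝ 2 u)
    (hper : Function.Periodic u (2 * π)) (hc : ∫ θ in (0)..2 * π, u θ * cos θ = 0)
    (hs : ∫ θ in (0)..2 * π, u θ * sin θ = 0) :
    4 * ∫ θ in (0)..2 * π, deriv u θ ^ 2 ≤ ∫ θ in (0)..2 * π, iteratedDeriv 2 u θ ^ 2 := by
  set c := fourierCoeffOn two_pi_pos (fun x => (u x : ℂ))
  have hc₁ : c 1 = 0 := by simp [c, fourierCoeffOn_ofReal hu.continuous, hc, hs]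
  have hc₂ : c (-1) = 0 := by simp [c, fourierCoeffOn_ofReal hu.continuous, hc, hs]
  have hu₁ : ContDiff ℝ 1 (deriv u) := hu.iterate_deriv' 1 1
  have hd := fourierCoeffOn_ofReal_deriv (hu.of_le one_le_two) hper
  have he := fourierCoeffOn_ofReal_deriv hu₁ hper.deriv
  have hterm : ∀ n : ℤ, 4 * ‖fourierCoeffOn two_pi_pos (fun x => ((deriv u x : ℝ) : ℂ)) n‖ ^ 2 ≤
      ‖fourierCoeffOn two_pi_pos (fun x => ((deriv (deriv u) x : ℝ) : ℂ)) n‖ ^ 2 := by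
    intro n
    rw [he, hd]
    simp only [norm_mul, Complex.norm_I, Complex.norm_intCast, one_mul, mul_pow, sq_abs]
    by_cases h : n = 1 ∨ n = -1
    · rcases h with rfl | rfl <;> simp [c, hc₁, hc₂]
    · push Not at h
      nlinarith [mul_le_mul_of_nonneg_right (four_mul_sq_le_pow_four h.1 h.2) (sq_nonneg ‖c n‖)]
  have hsum := hasSum_le hterm
    ((hasSum_sq_fourierCoeffOn_ofReal two_pi_pos (hu.continuous_deriv one_le_two)).mul_left 4)
    (hasSum_sq_fourierCoeffOn_ofReal two_pi_pos (hu₁.continuous_deriv le_rfl))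
  rw [sub_zero, ← mul_assoc, mul_comm 4, mul_assoc] at hsum
  rw [iteratedDeriv_succ, iteratedDeriv_one]
  exact le_of_mul_le_mul_left hsum (inv_pos.2 two_pi_pos)

theorem stmt6 :
    (∀ k : ℕ, 2 ≤ k → 0 < (k:ℝ)^4 - (5/2) * (k:ℝ)^2 + 9/16) ∧
    ∃ C : ℝ, 0 < C ∧ ∀ u : ℝ → ℝ, ContDiff ℝ 2 u →
      Function.Periodic u (2 * Real.pi) →
      (∫ θ in (0:ℝ)..(2 * Real.pi), u θ * Real.cos θ) = 0 →
      (∫ θ in (0:ℝ)..(2 * Real.pi), u θ * Real.sin θ) = 0 →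
      (∫ θ in (0:ℝ)..(2 * Real.pi),
          ((iteratedDeriv 2 u θ)^2 - (5/2) * (deriv u θ)^2 + (9/16) * (u θ)^2))
        ≥ C * ∫ θ in (0:ℝ)..(2 * Real.pi), ((iteratedDeriv 2 u θ)^2 + (u θ)^2) := by
  refine ⟨fun k hk => ?_, 3 / 8, by norm_num, fun u hu hper hc hs => ?_⟩
  · have hk₂ : (2 : ℝ) ≤ k := by exact_mod_cast hk
    have hk₄ : (4 : ℝ) ≤ k ^ 2 := by nlinarith
    nlinarith
  · have hW := four_mul_integral_deriv_sq_le hu hper hc hs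
    have hu₀ : 0 ≤ ∫ θ in (0)..2 * π, u θ ^ 2 :=
      integral_nonneg two_pi_pos.le fun _ _ => sq_nonneg _
    have i₀ : IntervalIntegrable (fun θ => u θ ^ 2) volume 0 (2 * π) :=
      (hu.continuous.pow 2).intervalIntegrable _ _
    have i₁ : IntervalIntegrable (fun θ => deriv u θ ^ 2) volume 0 (2 * π) :=
      ((hu.continuous_deriv one_le_two).pow 2).intervalIntegrable _ _
    have i₂ : IntervalIntegrable (fun θ => iteratedDeriv 2 u θ ^ 2) volume 0 (2 * π) :=
      ((hu.continuous_iteratedDeriv 2 le_rfl).pow 2).intervalIntegrable _ _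
    rw [integral_add (i₂.sub (i₁.const_mul _)) (i₀.const_mul _), integral_sub i₂ (i₁.const_mul _),
      intervalIntegral.integral_const_mul, intervalIntegral.integral_const_mul, integral_add i₂ i₀]
    linarith
end

section
/- For any λ, c > 0 and β ∈ ℝ, the function v(θ) = c(λ²cos²(θ-β) + λ^{-2}sin²(θ-β))^{3/2} satisfies the equation v'''' + 10v'' + 9v = τ v^{-5/3} on ℝ for some constant τ > 0, and satisfies ∫₀^{2π} cos³(θ + α) v(θ)^{-5/3} dθ = 0 for every α. -/
/-!
Since `λ² cos² x + λ⁻² sin² x = A + B cos 2x` with `A² - B² = 1`, the function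
`f θ = A + B cos 2(θ - β)` satisfies `f'' = 4(A - f)` and `f'² = 4(2Af - f² - 1)`. These two
relations alone give `(f^p)'' = -4p² f^p + 4p(2p-1)A f^(p-1) - 4p(p-1) f^(p-2)`, and applying this
twice to `v = c f^(3/2)` yields `v'''' + 10v'' + 9v = 9c f^(-5/2) = 9c^(8/3) v^(-5/3)`.
The orthogonality holds because the integrand is `π`-antiperiodic: `v` has period `π` while
`cos³(θ + α)` changes sign.
-/

open Real intervalIntegral

theorem Function.Antiperiodic.intervalIntegral_add_two_mul_eq_zero {F : ℝ → ℝ} {T : ℝ}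
    (hF : Function.Antiperiodic F T) (hcont : Continuous F) (a : ℝ) :
    ∫ x in a..a + 2 * T, F x = 0 := by
  have hshift : ∫ x in a + T..a + 2 * T, F x = -∫ x in a..a + T, F x := by
    rw [← intervalIntegral.integral_neg, two_mul, ← add_assoc]
    simp only [← hF _, intervalIntegral.integral_comp_add_right]
  rw [← intervalIntegral.integral_add_adjacent_intervals (hcont.intervalIntegrable _ _)
    (hcont.intervalIntegrable _ _), hshift, add_neg_cancel]

section
variable {f : ℝ → ℝ} {A : ℝ}

theorem iteratedDeriv_two_rpow_of_ode (hf : ContDiff ℝ 2 f) (hpos : ∀ t, 0 < f t)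
    (hf'' : ∀ t, deriv (deriv f) t = 4 * (A - f t))
    (henergy : ∀ t, deriv f t ^ 2 = 4 * (2 * A * f t - f t ^ 2 - 1)) (p t : ℝ) :
    iteratedDeriv 2 (fun t => f t ^ p) t = -4 * p ^ 2 * f t ^ p
      + 4 * p * (2 * p - 1) * A * f t ^ (p - 1) - 4 * p * (p - 1) * f t ^ (p - 2) := by
  have hd : Differentiable ℝ f := hf.differentiable (by norm_num)
  have hd' : Differentiable ℝ (deriv f) :=
    ((contDiff_succ_iff_deriv (n := 1)).1 hf).2.2.differentiable one_ne_zero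
  have hpow : ∀ t, HasDerivAt (fun t => f t ^ p) (deriv f t * p * f t ^ (p - 1)) t :=
    fun t => (hd t).hasDerivAt.rpow_const (Or.inl (hpos t).ne')
  have hpow' : HasDerivAt (fun t => deriv f t * p * f t ^ (p - 1))
      (deriv (deriv f) t * p * f t ^ (p - 1)
        + deriv f t * p * (deriv f t * (p - 1) * f t ^ (p - 1 - 1))) t :=
    ((hd' t).hasDerivAt.mul_const p).mul ((hd t).hasDerivAt.rpow_const (Or.inl (hpos t).ne'))
  rw [iteratedDeriv_succ, iteratedDeriv_one, funext fun t => (hpow t).deriv, hpow'.deriv, hf'']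
  have hne := (hpos t).ne'
  have hp1 : f t ^ (p - 1) = f t ^ (p - 2) * f t := by
    rw [← rpow_add_one hne]
    ring_nf
  have hp0 : f t ^ p = f t ^ (p - 2) * f t * f t := by
    rw [← rpow_add_one hne, ← rpow_add_one hne]
    ring_nf
  rw [show p - 1 - 1 = p - 2 by ring, hp1, hp0]
  linear_combination p * (p - 1) * f t ^ (p - 2) * henergy t

theorem rpow_three_halves_ode (hf : ContDiff ℝ 2 f) (hpos : ∀ t, 0 < f t)
    (hf'' : ∀ t, deriv (deriv f) t = 4 * (A - f t))
    (henergy : ∀ t, deriv f t ^ 2 = 4 * (2 * A * f t - f t ^ 2 - 1)) (t : ℝ) :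
    iteratedDeriv 4 (fun t => f t ^ (3 / 2 : ℝ)) t
      + 10 * iteratedDeriv 2 (fun t => f t ^ (3 / 2 : ℝ)) t + 9 * f t ^ (3 / 2 : ℝ)
      = 9 * f t ^ (-5 / 2 : ℝ) := by
  have key := iteratedDeriv_two_rpow_of_ode hf hpos hf'' henergy
  have h2 : iteratedDeriv 2 (fun t => f t ^ (3 / 2 : ℝ)) = fun t =>
      12 * A * f t ^ (1 / 2 : ℝ) - 3 * f t ^ (-1 / 2 : ℝ) - 9 * f t ^ (3 / 2 : ℝ) := by
    funext t
    rw [key]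
    norm_num
    ring
  have h4 : iteratedDeriv 4 (fun t => f t ^ (3 / 2 : ℝ)) =
      iteratedDeriv 2 (iteratedDeriv 2 (fun t => f t ^ (3 / 2 : ℝ))) := by
    simp only [iteratedDeriv_eq_iterate, ← Function.iterate_add_apply]
  rw [h4, h2, iteratedDeriv_fun_sub, iteratedDeriv_fun_sub, iteratedDeriv_const_mul_field,
    iteratedDeriv_const_mul_field, iteratedDeriv_const_mul_field, key, key, key]
  · norm_num
    ring
  all_goals fun_prop (disch := exact (hpos _).ne')
end

theorem sq_mul_cos_sq_add_inv_sq_mul_sin_sq (lam x : ℝ) :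
    lam ^ 2 * cos x ^ 2 + lam⁻¹ ^ 2 * sin x ^ 2
      = (lam ^ 2 + lam⁻¹ ^ 2) / 2 + (lam ^ 2 - lam⁻¹ ^ 2) / 2 * cos (2 * x) := by
  rw [cos_two_mul, sin_sq]
  ring

section
variable {A B : ℝ} (β : ℝ)

theorem add_mul_cos_pos (hA : 0 < A) (hAB : A ^ 2 - B ^ 2 = 1) (x : ℝ) : 0 < A + B * cos x := by
  have hB : |B| < A := abs_lt_of_sq_lt_sq (by linarith) hA.le
  have hBcos : |B * cos x| ≤ |B| := by
    rw [abs_mul]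
    exact mul_le_of_le_one_right (abs_nonneg B) (abs_cos_le_one x)
  linarith [neg_abs_le (B * cos x)]

theorem deriv_add_mul_cos_two_mul_sub :
    deriv (fun t => A + B * cos (2 * (t - β))) = fun t => -(2 * B * sin (2 * (t - β))) := by
  funext t
  have h : HasDerivAt (fun t => A + B * cos (2 * (t - β)))
      (B * (-sin (2 * (t - β)) * (2 * 1))) t :=
    ((((hasDerivAt_id t).sub_const β).const_mul 2).cos.const_mul B).const_add A
  rw [h.deriv]
  ring

theorem deriv_deriv_add_mul_cos_two_mul_sub :
    deriv (deriv (fun t => A + B * cos (2 * (t - β))))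
      = fun t => 4 * (A - (A + B * cos (2 * (t - β)))) := by
  funext t
  have h : HasDerivAt (fun t => -(2 * B * sin (2 * (t - β))))
      (-(2 * B * (cos (2 * (t - β)) * (2 * 1)))) t :=
    ((((hasDerivAt_id t).sub_const β).const_mul 2).sin.const_mul (2 * B)).neg
  rw [deriv_add_mul_cos_two_mul_sub, h.deriv]
  ring

theorem add_mul_cos_two_mul_sub_rpow_ode (hA : 0 < A) (hAB : A ^ 2 - B ^ 2 = 1) (t : ℝ) :
    iteratedDeriv 4 (fun t => (A + B * cos (2 * (t - β))) ^ (3 / 2 : ℝ)) t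
      + 10 * iteratedDeriv 2 (fun t => (A + B * cos (2 * (t - β))) ^ (3 / 2 : ℝ)) t
      + 9 * (A + B * cos (2 * (t - β))) ^ (3 / 2 : ℝ)
      = 9 * (A + B * cos (2 * (t - β))) ^ (-5 / 2 : ℝ) := by
  refine rpow_three_halves_ode (A := A) (by fun_prop) (fun t => add_mul_cos_pos hA hAB _)
    (fun t => by rw [deriv_deriv_add_mul_cos_two_mul_sub]) (fun t => ?_) t
  rw [deriv_add_mul_cos_two_mul_sub]
  linear_combination (4 * B ^ 2) * sin_sq_add_cos_sq (2 * (t - β)) - 4 * hAB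
end

theorem stmt13 (lam c β : ℝ) (hlam : 0 < lam) (hc : 0 < c) (v : ℝ → ℝ)
    (hv : ∀ θ, v θ = c * (lam^2 * Real.cos (θ - β)^2
        + lam⁻¹^2 * Real.sin (θ - β)^2) ^ ((3:ℝ)/2)) :
    ∃ τ : ℝ, 0 < τ ∧
      (∀ θ, iteratedDeriv 4 v θ + 10 * iteratedDeriv 2 v θ + 9 * v θ
          = τ * v θ ^ (-(5:ℝ)/3)) ∧
      ∀ α : ℝ, (∫ θ in (0:ℝ)..(2 * Real.pi),
          Real.cos (θ + α)^3 * v θ ^ (-(5:ℝ)/3)) = 0 := by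
  have hA : 0 < (lam ^ 2 + lam⁻¹ ^ 2) / 2 := by positivity
  have hAB : ((lam ^ 2 + lam⁻¹ ^ 2) / 2) ^ 2 - ((lam ^ 2 - lam⁻¹ ^ 2) / 2) ^ 2 = 1 := by
    field_simp
    ring
  set A := (lam ^ 2 + lam⁻¹ ^ 2) / 2
  set B := (lam ^ 2 - lam⁻¹ ^ 2) / 2
  have hfpos : ∀ θ, 0 < A + B * cos (2 * (θ - β)) := fun θ => add_mul_cos_pos hA hAB _
  have hvf : v = fun θ => c * (A + B * cos (2 * (θ - β))) ^ (3 / 2 : ℝ) := by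
    funext θ
    rw [hv, sq_mul_cos_sq_add_inv_sq_mul_sin_sq]
  have hvpow : ∀ θ,
      v θ ^ (-(5:ℝ)/3) = c ^ (-(5:ℝ)/3) * (A + B * cos (2 * (θ - β))) ^ (-5 / 2 : ℝ) := by
    intro θ
    rw [hvf, mul_rpow hc.le (rpow_nonneg (hfpos θ).le _), ← rpow_mul (hfpos θ).le]
    norm_num
  refine ⟨9 * c ^ ((8:ℝ)/3), by positivity, fun θ => ?_, fun α => ?_⟩
  · rw [hvpow, hvf, iteratedDeriv_const_mul_field, iteratedDeriv_const_mul_field,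
      mul_assoc 9, ← mul_assoc (c ^ _), ← rpow_add hc,
      show (8:ℝ) / 3 + -5 / 3 = 1 by norm_num, rpow_one]
    linear_combination c * add_mul_cos_two_mul_sub_rpow_ode β hA hAB θ
  · have hanti : Function.Antiperiodic (fun θ => cos (θ + α) ^ 3 * v θ ^ (-(5:ℝ)/3)) π := by
      intro θ
      simp only [hv, show θ + π - β = θ - β + π by ring, show θ + π + α = θ + α + π by ring,
        cos_add_pi, sin_add_pi, neg_sq]
      ring
    have hcont : Continuous fun θ => cos (θ + α) ^ 3 * v θ ^ (-(5:ℝ)/3) := by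
      simp only [hvpow]
      exact (by fun_prop : Continuous fun θ => cos (θ + α) ^ 3).mul (continuous_const.mul
        ((by fun_prop : Continuous fun θ => A + B * cos (2 * (θ - β))).rpow_const
          fun θ => Or.inl (hfpos θ).ne'))
    simpa using hanti.intervalIntegral_add_two_mul_eq_zero hcont 0
end

section
/- Let v: ℝ → ℝ be positive, 2π-periodic, and C⁴, satisfying v'''' + 10v'' + 9v = τ v^{-5/3} with τ > 0, and set w = v^{1/3}. Then w(θ)⁵(w''(θ) + w(θ)) = w(θ+π)⁵(w''(θ+π) + w(θ+π)) for all θ. -/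
/-!
Write `A = w⁵ (w'' + w)` in terms of `v = w³`. Differentiating twice and using the equation gives
`A'' + 4 A = N`, where `N` is a first integral of the equation: `N'` is `2/9 v'` times the
equation. So `A - N / 4` solves the harmonic oscillator of frequency `2` and is `π`-periodic.
-/

open Real

theorem eq_zero_of_hasDerivAt_harmonic {f g : ℝ → ℝ} {k : ℝ} (hk : k ≠ 0)
    (hf : ∀ x, HasDerivAt f (g x) x) (hg : ∀ x, HasDerivAt g (-k ^ 2 * f x) x)
    (hf0 : f 0 = 0) (hg0 : g 0 = 0) (x : ℝ) : f x = 0 := by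
  have henergy : ∀ t, HasDerivAt (fun t => k ^ 2 * f t ^ 2 + g t ^ 2) 0 t := fun t =>
    ((((hf t).pow 2).const_mul (k ^ 2)).add ((hg t).pow 2)).congr_deriv (by ring)
  have hconst := is_const_of_deriv_eq_zero (fun t => (henergy t).differentiableAt)
    (fun t => (henergy t).deriv) x 0
  simp only [hf0, hg0] at hconst
  have hfx : k ^ 2 * f x ^ 2 = 0 := by
    nlinarith [mul_nonneg (sq_nonneg k) (sq_nonneg (f x)), sq_nonneg (g x)]
  simpa [hk] using hfx

theorem periodic_of_hasDerivAt_harmonic {f g : ℝ → ℝ} {k c : ℝ} (hk : k ≠ 0)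
    (hf : ∀ x, HasDerivAt f (g x) x) (hg : ∀ x, HasDerivAt g (c - k ^ 2 * f x) x) :
    Function.Periodic f (2 * π / k) := by
  set a := f 0 - c / k ^ 2
  set b := g 0 / k
  have hcos (t : ℝ) : HasDerivAt (fun t => cos (k * t)) (-sin (k * t) * k) t := by
    simpa using ((hasDerivAt_id t).const_mul k).cos
  have hsin (t : ℝ) : HasDerivAt (fun t => sin (k * t)) (cos (k * t) * k) t := by
    simpa using ((hasDerivAt_id t).const_mul k).sin
  have hsol : ∀ t, f t - c / k ^ 2 - a * cos (k * t) - b * sin (k * t) = 0 :=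
    eq_zero_of_hasDerivAt_harmonic
      (g := fun t => g t + a * k * sin (k * t) - b * k * cos (k * t)) hk
      (fun t => ((((hf t).sub_const _).sub ((hcos t).const_mul a)).sub
        ((hsin t).const_mul b)).congr_deriv (by ring))
      (fun t => ((((hg t).add ((hsin t).const_mul (a * k)))).sub
        ((hcos t).const_mul (b * k))).congr_deriv (by field_simp; ring))
      (by simp [a]) (by simp [b]; field_simp; ring)
  intro t
  have hshift : k * (t + 2 * π / k) = k * t + 2 * π := by field_simp
  have hsol' := hsol (t + 2 * π / k)
  rw [hshift, cos_add_two_pi, sin_add_two_pi] at hsol'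
  linarith [hsol t]

theorem ContDiff.hasDerivAt_iteratedDeriv {𝕜 F : Type*} [NontriviallyNormedField 𝕜]
    [NormedAddCommGroup F] [NormedSpace 𝕜 F] {f : 𝕜 → F} {n k : ℕ} (hf : ContDiff 𝕜 n f)
    (hk : k < n) (x : 𝕜) : HasDerivAt (iteratedDeriv k f) (iteratedDeriv (k + 1) f x) x := by
  rw [iteratedDeriv_succ]
  exact (hf.differentiable_iteratedDeriv k (by exact_mod_cast hk) x).hasDerivAt

noncomputable def cubeRootCurvature (v : ℝ → ℝ) (x : ℝ) : ℝ :=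
  v x ^ 2 - 2 / 9 * iteratedDeriv 1 v x ^ 2 + 1 / 3 * v x * iteratedDeriv 2 v x

noncomputable def firstIntegral (τ : ℝ) (v : ℝ → ℝ) (x : ℝ) : ℝ :=
  2 / 9 * iteratedDeriv 1 v x * iteratedDeriv 3 v x - 1 / 9 * iteratedDeriv 2 v x ^ 2
    + 10 / 9 * iteratedDeriv 1 v x ^ 2 + v x ^ 2 + τ / 3 * v x ^ (-(2 : ℝ) / 3)

section Equation

variable {τ : ℝ} {v : ℝ → ℝ}

theorem pow_five_mul_iteratedDeriv_two_add_eq_cubeRootCurvature {w : ℝ → ℝ}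
    (hv : ContDiff ℝ 2 v) (hpos : ∀ x, 0 < v x) (hw : ∀ x, w x = v x ^ ((1 : ℝ) / 3)) (x : ℝ) :
    w x ^ 5 * (iteratedDeriv 2 w x + w x) = cubeRootCurvature v x := by
  have d0 (y : ℝ) : HasDerivAt v (iteratedDeriv 1 v y) y := by
    simpa using hv.hasDerivAt_iteratedDeriv (k := 0) (by norm_num) y
  have d1 := hv.hasDerivAt_iteratedDeriv (k := 1) (by norm_num) x
  have dw (y : ℝ) :
      HasDerivAt w (iteratedDeriv 1 v y * (1 / 3) * v y ^ ((1 : ℝ) / 3 - 1)) y := by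
    rw [show w = fun y => v y ^ ((1 : ℝ) / 3) from funext hw]
    exact (d0 y).rpow_const (Or.inl (hpos y).ne')
  have hw2 : iteratedDeriv 2 w x = iteratedDeriv 2 v x * (1 / 3) * v x ^ ((1 : ℝ) / 3 - 1)
      + iteratedDeriv 1 v x * (1 / 3)
        * (iteratedDeriv 1 v x * ((1 : ℝ) / 3 - 1) * v x ^ ((1 : ℝ) / 3 - 1 - 1)) := by
    rw [iteratedDeriv_succ, iteratedDeriv_one, funext fun y => (dw y).deriv]
    exact ((d1.mul_const _).mul ((d0 x).rpow_const (Or.inl (hpos x).ne'))).deriv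
  have hx := (hpos x).ne'
  rw [hw2, hw, rpow_sub_one hx, rpow_sub_one hx, rpow_sub_one hx, cubeRootCurvature]
  have hcube : v x = (v x ^ ((1 : ℝ) / 3)) ^ 3 := by
    rw [← rpow_natCast, ← rpow_mul (hpos x).le]; norm_num
  have hs : v x ^ ((1 : ℝ) / 3) ≠ 0 := (rpow_pos_of_pos (hpos x) _).ne'
  generalize v x ^ ((1 : ℝ) / 3) = s at hcube hs ⊢
  rw [hcube]
  field_simp
  ring

theorem hasDerivAt_cubeRootCurvature (hv : ContDiff ℝ 3 v) (x : ℝ) :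
    HasDerivAt (cubeRootCurvature v)
      (2 * v x * iteratedDeriv 1 v x - 1 / 9 * iteratedDeriv 1 v x * iteratedDeriv 2 v x
        + 1 / 3 * v x * iteratedDeriv 3 v x) x := by
  have d0 := hv.hasDerivAt_iteratedDeriv (k := 0) (by norm_num) x
  have d1 := hv.hasDerivAt_iteratedDeriv (k := 1) (by norm_num) x
  have d2 := hv.hasDerivAt_iteratedDeriv (k := 2) (by norm_num) x
  simp only [iteratedDeriv_zero, zero_add] at d0
  exact (((d0.pow 2).sub ((d1.pow 2).const_mul (2 / 9))).add
    ((d0.const_mul (1 / 3)).mul d2)).congr_deriv (by push_cast; ring)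

theorem hasDerivAt_firstIntegral (hv : ContDiff ℝ 4 v) (hpos : ∀ x, 0 < v x)
    (hODE : ∀ x, iteratedDeriv 4 v x + 10 * iteratedDeriv 2 v x + 9 * v x
      = τ * v x ^ (-(5 : ℝ) / 3)) (x : ℝ) : HasDerivAt (firstIntegral τ v) 0 x := by
  have d0 := hv.hasDerivAt_iteratedDeriv (k := 0) (by norm_num) x
  have d1 := hv.hasDerivAt_iteratedDeriv (k := 1) (by norm_num) x
  have d2 := hv.hasDerivAt_iteratedDeriv (k := 2) (by norm_num) x
  have d3 := hv.hasDerivAt_iteratedDeriv (k := 3) (by norm_num) x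
  simp only [iteratedDeriv_zero, zero_add] at d0
  have dpow := d0.rpow_const (p := -(2 : ℝ) / 3) (Or.inl (hpos x).ne')
  rw [show -(2 : ℝ) / 3 - 1 = -(5 : ℝ) / 3 by norm_num] at dpow
  refine (((((d1.const_mul (2 / 9)).mul d3).sub ((d2.pow 2).const_mul (1 / 9))).add
    ((d1.pow 2).const_mul (10 / 9))).add (d0.pow 2) |>.add (dpow.const_mul (τ / 3))).congr_deriv ?_
  linear_combination (2 / 9 * iteratedDeriv 1 v x) * hODE x

theorem hasDerivAt_deriv_cubeRootCurvature (hv : ContDiff ℝ 4 v) (hpos : ∀ x, 0 < v x)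
    (hODE : ∀ x, iteratedDeriv 4 v x + 10 * iteratedDeriv 2 v x + 9 * v x
      = τ * v x ^ (-(5 : ℝ) / 3)) (x : ℝ) :
    HasDerivAt (fun x => 2 * v x * iteratedDeriv 1 v x
        - 1 / 9 * iteratedDeriv 1 v x * iteratedDeriv 2 v x + 1 / 3 * v x * iteratedDeriv 3 v x)
      (firstIntegral τ v x - 4 * cubeRootCurvature v x) x := by
  have d0 := hv.hasDerivAt_iteratedDeriv (k := 0) (by norm_num) x
  have d1 := hv.hasDerivAt_iteratedDeriv (k := 1) (by norm_num) x
  have d2 := hv.hasDerivAt_iteratedDeriv (k := 2) (by norm_num) x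
  have d3 := hv.hasDerivAt_iteratedDeriv (k := 3) (by norm_num) x
  simp only [iteratedDeriv_zero, zero_add] at d0
  have hrpow : v x * v x ^ (-(5 : ℝ) / 3) = v x ^ (-(2 : ℝ) / 3) := by
    rw [← rpow_one_add' (hpos x).le (by norm_num)]
    norm_num
  refine ((((d0.const_mul 2).mul d1).sub ((d1.const_mul (1 / 9)).mul d2)).add
    ((d0.const_mul (1 / 3)).mul d3)).congr_deriv ?_
  simp only [firstIntegral, cubeRootCurvature]
  linear_combination (1 / 3 * v x) * hODE x + τ / 3 * hrpow

theorem cubeRootCurvature_periodic (hv : ContDiff ℝ 4 v) (hpos : ∀ x, 0 < v x)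
    (hODE : ∀ x, iteratedDeriv 4 v x + 10 * iteratedDeriv 2 v x + 9 * v x
      = τ * v x ^ (-(5 : ℝ) / 3)) :
    Function.Periodic (cubeRootCurvature v) π := by
  have hconst (x : ℝ) : firstIntegral τ v x = firstIntegral τ v 0 :=
    is_const_of_deriv_eq_zero (fun y => (hasDerivAt_firstIntegral hv hpos hODE y).differentiableAt)
      (fun y => (hasDerivAt_firstIntegral hv hpos hODE y).deriv) x 0
  simpa using periodic_of_hasDerivAt_harmonic (k := 2) (c := firstIntegral τ v 0) two_ne_zero
    (hasDerivAt_cubeRootCurvature (hv.of_le (by norm_num)))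
    fun x => (hasDerivAt_deriv_cubeRootCurvature hv hpos hODE x).congr_deriv (by
      rw [hconst x]; norm_num)

end Equation

theorem stmt14_general (v : ℝ → ℝ) (hv : ContDiff ℝ 4 v) (hpos : ∀ θ, 0 < v θ)
    (τ : ℝ)
    (hODE : ∀ θ, iteratedDeriv 4 v θ + 10 * iteratedDeriv 2 v θ + 9 * v θ
        = τ * v θ ^ (-(5:ℝ)/3))
    (w : ℝ → ℝ) (hw : ∀ θ, w θ = v θ ^ ((1:ℝ)/3)) :
    ∀ θ : ℝ, (w θ)^5 * (iteratedDeriv 2 w θ + w θ)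
      = (w (θ + Real.pi))^5 * (iteratedDeriv 2 w (θ + Real.pi) + w (θ + Real.pi)) := by
  intro θ
  have hv2 : ContDiff ℝ 2 v := hv.of_le (by norm_num)
  rw [pow_five_mul_iteratedDeriv_two_add_eq_cubeRootCurvature hv2 hpos hw,
    pow_five_mul_iteratedDeriv_two_add_eq_cubeRootCurvature hv2 hpos hw,
    cubeRootCurvature_periodic hv hpos hODE θ]

theorem stmt14 (v : ℝ → ℝ) (hv : ContDiff ℝ 4 v) (hpos : ∀ θ, 0 < v θ)
    (hper : Function.Periodic v (2 * Real.pi)) (τ : ℝ) (hτ : 0 < τ)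
    (hODE : ∀ θ, iteratedDeriv 4 v θ + 10 * iteratedDeriv 2 v θ + 9 * v θ
        = τ * v θ ^ (-(5:ℝ)/3))
    (w : ℝ → ℝ) (hw : ∀ θ, w θ = v θ ^ ((1:ℝ)/3)) :
    ∀ θ : ℝ, (w θ)^5 * (iteratedDeriv 2 w θ + w θ)
      = (w (θ + Real.pi))^5 * (iteratedDeriv 2 w (θ + Real.pi) + w (θ + Real.pi)) :=
  stmt14_general v hv hpos τ hODE w hw
end

section
/- Let v(θ,t) > 0 be smooth and satisfy ∂_t v = -(3/4)(Q - Q̄)v, where Q(θ,t) = (1/9)v^{5/3}(v'''' + 10v'' + 9v) and Q̄(t) = (∫₀^{2π} Q v^{-2/3} dθ)/(∫₀^{2π} v^{-2/3} dθ). If ∫₀^{2π} cos³(θ+α) v(θ,0)^{-5/3} dθ = 0 for all α ∈ [0,2π), then ∫₀^{2π} cos³(θ+α) v(θ,t)^{-5/3} dθ = 0 for all t ≥ 0 and all α. -/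
open Real intervalIntegral MeasureTheory Set Filter Metric
open scoped ContDiff

private lemma aux_param_deriv_smooth {u : ℝ → ℝ → ℝ}
    (h : ContDiff ℝ (⊤ : ℕ∞) (fun p : ℝ × ℝ => u p.1 p.2)) :
    ContDiff ℝ (⊤ : ℕ∞) (fun p : ℝ × ℝ => deriv (u p.1) p.2) := by
  have h2 : ContDiff ℝ (⊤ : ℕ∞) (fun p : ℝ × ℝ => fderiv ℝ (u p.1) p.2 1) := by
    apply ContDiff.fderiv_apply (f := fun (p : ℝ × ℝ) θ => u p.1 θ)
      (g := fun p : ℝ × ℝ => p.2) (k := fun _ => (1:ℝ)) (m := (⊤ : ℕ∞)) (n := (⊤ : ℕ∞))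
    · exact h.comp ((contDiff_fst.fst).prodMk contDiff_snd)
    · exact contDiff_snd
    · exact contDiff_const
    · exact (by simp)
  have : (fun p : ℝ × ℝ => deriv (u p.1) p.2)
      = fun p : ℝ × ℝ => fderiv ℝ (u p.1) p.2 1 := by
    funext p; rw [fderiv_apply_one_eq_deriv]
  rw [this]; exact h2

private lemma aux_iter_smooth : ∀ (k : ℕ) (u : ℝ → ℝ → ℝ),
    ContDiff ℝ (⊤ : ℕ∞) (fun p : ℝ × ℝ => u p.1 p.2) →
    ContDiff ℝ (⊤ : ℕ∞) (fun p : ℝ × ℝ => iteratedDeriv k (u p.1) p.2)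
  | 0, u, h => by simpa [iteratedDeriv_zero] using h
  | (k+1), u, h => by
    have := aux_iter_smooth k (fun t θ => deriv (u t) θ) (aux_param_deriv_smooth h)
    simpa [iteratedDeriv_succ'] using this


private lemma aux_per_deriv {u : ℝ → ℝ} (hper : ∀ θ, u (θ + 2*π) = u θ) :
    ∀ θ, deriv u (θ + 2*π) = deriv u θ := by
  intro θ
  have h : (fun x => u (x + 2*π)) = u := funext hper
  conv_rhs => rw [← h]
  rw [deriv_comp_add_const]

private lemma aux_ibp {f g f' g' : ℝ → ℝ}
    (hf : ∀ x, HasDerivAt f (f' x) x) (hg : ∀ x, HasDerivAt g (g' x) x)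
    (hf' : Continuous f') (hg' : Continuous g')
    (hbd : f (2*π) * g (2*π) = f 0 * g 0) :
    ∫ θ in (0:ℝ)..(2*π), f θ * g' θ = - ∫ θ in (0:ℝ)..(2*π), f' θ * g θ := by
  have hfc : Continuous f := by
    rw [continuous_iff_continuousAt]; exact fun x => (hf x).continuousAt
  have hgc : Continuous g := by
    rw [continuous_iff_continuousAt]; exact fun x => (hg x).continuousAt
  have h := integral_deriv_mul_eq_sub (a := 0) (b := 2*π)
    (fun x _ => hf x) (fun x _ => hg x)
    (hf'.intervalIntegrable _ _) (hg'.intervalIntegrable _ _)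
  rw [hbd, sub_self] at h
  rw [intervalIntegral.integral_add (f := fun x => f' x * g x) (g := fun x => f x * g' x) ((hf'.mul hgc).intervalIntegrable _ _)
    ((hfc.mul hg').intervalIntegrable _ _)] at h
  linarith

private lemma aux_keyzero {u : ℝ → ℝ} (hu : ContDiff ℝ (⊤ : ℕ∞) u)
    (hper : ∀ θ, u (θ + 2*π) = u θ) (α : ℝ) :
    (∫ θ in (0:ℝ)..(2*π),
      Real.cos (θ+α)^3 * (iteratedDeriv 4 u θ + 10 * iteratedDeriv 2 u θ + 9 * u θ)) = 0 := by
  -- the derivatives of u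
  have Dstep : ∀ w : ℝ → ℝ, ContDiff ℝ ∞ w →
      ContDiff ℝ ∞ (deriv w) :=
    fun w hw => (contDiff_infty_iff_deriv.mp hw).2
  have Ddiff : ∀ w : ℝ → ℝ, ContDiff ℝ ∞ w → Differentiable ℝ w :=
    fun w hw => (contDiff_infty_iff_deriv.mp hw).1
  have hu0 : ContDiff ℝ ∞ u := hu.of_le (by simp)
  have hu1 : ContDiff ℝ ∞ (deriv u) := Dstep _ hu0
  have hu2 : ContDiff ℝ ∞ (deriv (deriv u)) := Dstep _ hu1
  have hu3 : ContDiff ℝ ∞ (deriv (deriv (deriv u))) := Dstep _ hu2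
  have hdu : ∀ x, HasDerivAt u (deriv u x) x :=
    fun x => (Ddiff _ hu0 x).hasDerivAt
  have hdu1 : ∀ x, HasDerivAt (deriv u) (deriv (deriv u) x) x :=
    fun x => (Ddiff _ hu1 x).hasDerivAt
  have hdu2 : ∀ x, HasDerivAt (deriv (deriv u)) (deriv (deriv (deriv u)) x) x :=
    fun x => (Ddiff _ hu2 x).hasDerivAt
  have hdu3 : ∀ x, HasDerivAt (deriv (deriv (deriv u)))
      (deriv (deriv (deriv (deriv u))) x) x :=
    fun x => (Ddiff _ hu3 x).hasDerivAt
  have hp1 := aux_per_deriv hper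
  have hp2 := aux_per_deriv hp1
  have hp3 := aux_per_deriv hp2
  -- the test function and its derivatives
  set c0 : ℝ → ℝ := fun θ => (3*Real.cos (θ+α) + Real.cos (3*(θ+α)))/4 with hc0def
  set c1 : ℝ → ℝ := fun θ => ((-3)*Real.sin (θ+α) + (-3)*Real.sin (3*(θ+α)))/4 with hc1def
  set c2 : ℝ → ℝ := fun θ => ((-3)*Real.cos (θ+α) + (-9)*Real.cos (3*(θ+α)))/4 with hc2def
  set c3 : ℝ → ℝ := fun θ => (3*Real.sin (θ+α) + 27*Real.sin (3*(θ+α)))/4 with hc3def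
  set c4 : ℝ → ℝ := fun θ => (3*Real.cos (θ+α) + 81*Real.cos (3*(θ+α)))/4 with hc4def
  have hA : ∀ θ : ℝ, HasDerivAt (fun θ : ℝ => Real.cos (θ+α)) (-Real.sin (θ+α)) θ := by
    intro θ
    have h0 : HasDerivAt (fun θ : ℝ => θ + α) 1 θ := (hasDerivAt_id θ).add_const α
    exact ((Real.hasDerivAt_cos (θ+α)).comp θ h0).congr_deriv (mul_one _)
  have hAs : ∀ θ : ℝ, HasDerivAt (fun θ : ℝ => Real.sin (θ+α)) (Real.cos (θ+α)) θ := by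
    intro θ
    have h0 : HasDerivAt (fun θ : ℝ => θ + α) 1 θ := (hasDerivAt_id θ).add_const α
    exact ((Real.hasDerivAt_sin (θ+α)).comp θ h0).congr_deriv (mul_one _)
  have h3 : ∀ θ : ℝ, HasDerivAt (fun θ : ℝ => 3*(θ+α)) 3 θ := by
    intro θ
    simpa using ((hasDerivAt_id θ).add_const α).const_mul (3:ℝ)
  have hB : ∀ θ : ℝ, HasDerivAt (fun θ : ℝ => Real.cos (3*(θ+α)))
      (-3*Real.sin (3*(θ+α))) θ := by
    intro θ
    have := (Real.hasDerivAt_cos (3*(θ+α))).comp θ (h3 θ)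
    exact this.congr_deriv (by ring)
  have hBs : ∀ θ : ℝ, HasDerivAt (fun θ : ℝ => Real.sin (3*(θ+α)))
      (3*Real.cos (3*(θ+α))) θ := by
    intro θ
    have := (Real.hasDerivAt_sin (3*(θ+α))).comp θ (h3 θ)
    exact this.congr_deriv (by ring)
  have hdc0 : ∀ θ, HasDerivAt c0 (c1 θ) θ := by
    intro θ
    have := (((hA θ).const_mul (3:ℝ)).add (hB θ)).div_const 4
    exact this.congr_deriv (by simp only [hc1def]; ring)
  have hdc1 : ∀ θ, HasDerivAt c1 (c2 θ) θ := by
    intro θ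
    have := (((hAs θ).const_mul ((-3):ℝ)).add ((hBs θ).const_mul ((-3):ℝ))).div_const 4
    exact this.congr_deriv (by simp only [hc2def]; ring)
  have hdc2 : ∀ θ, HasDerivAt c2 (c3 θ) θ := by
    intro θ
    have := (((hA θ).const_mul ((-3):ℝ)).add ((hB θ).const_mul ((-9):ℝ))).div_const 4
    exact this.congr_deriv (by simp only [hc3def]; ring)
  have hdc3 : ∀ θ, HasDerivAt c3 (c4 θ) θ := by
    intro θ
    have := (((hAs θ).const_mul (3:ℝ)).add ((hBs θ).const_mul (27:ℝ))).div_const 4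
    exact this.congr_deriv (by simp only [hc4def]; ring)
  -- continuity
  have hcc0 : Continuous c0 := by fun_prop
  have hcc1 : Continuous c1 := by fun_prop
  have hcc2 : Continuous c2 := by fun_prop
  have hcc3 : Continuous c3 := by fun_prop
  have hcc4 : Continuous c4 := by fun_prop
  -- periodicity of the test functions
  have hper6c : ∀ x : ℝ, Real.cos (x + 2*π + 2*π + 2*π) = Real.cos x := by
    simp [Real.cos_add_two_pi]
  have hper6s : ∀ x : ℝ, Real.sin (x + 2*π + 2*π + 2*π) = Real.sin x := by
    simp [Real.sin_add_two_pi]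
  have hpc : ∀ (c : ℝ → ℝ), (∀ θ, c (θ + 2*π) = c θ) → ∀ (w : ℝ → ℝ),
      (∀ θ, w (θ + 2*π) = w θ) → c (2*π) * w (2*π) = c 0 * w 0 := by
    intro c hc w hw
    rw [show (2*π:ℝ) = 0 + 2*π by ring, hc, hw]
  have hperc0 : ∀ θ, c0 (θ + 2*π) = c0 θ := by
    intro θ
    simp only [hc0def]
    rw [show (3:ℝ)*(θ + 2*π + α) = 3*(θ+α) + 2*π + 2*π + 2*π by ring, hper6c,
      show θ + 2*π + α = (θ + α) + 2*π by ring, Real.cos_add_two_pi]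
  have hperc1 : ∀ θ, c1 (θ + 2*π) = c1 θ := by
    intro θ
    simp only [hc1def]
    rw [show (3:ℝ)*(θ + 2*π + α) = 3*(θ+α) + 2*π + 2*π + 2*π by ring, hper6s,
      show θ + 2*π + α = (θ + α) + 2*π by ring, Real.sin_add_two_pi]
  have hperc2 : ∀ θ, c2 (θ + 2*π) = c2 θ := by
    intro θ
    simp only [hc2def]
    rw [show (3:ℝ)*(θ + 2*π + α) = 3*(θ+α) + 2*π + 2*π + 2*π by ring, hper6c,
      show θ + 2*π + α = (θ + α) + 2*π by ring, Real.cos_add_two_pi]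
  have hperc3 : ∀ θ, c3 (θ + 2*π) = c3 θ := by
    intro θ
    simp only [hc3def]
    rw [show (3:ℝ)*(θ + 2*π + α) = 3*(θ+α) + 2*π + 2*π + 2*π by ring, hper6s,
      show θ + 2*π + α = (θ + α) + 2*π by ring, Real.sin_add_two_pi]
  -- four integrations by parts
  have e1 : ∫ θ in (0:ℝ)..(2*π), c0 θ * deriv (deriv (deriv (deriv u))) θ
      = - ∫ θ in (0:ℝ)..(2*π), c1 θ * deriv (deriv (deriv u)) θ :=
    aux_ibp hdc0 hdu3 hcc1 ((Dstep _ hu3).continuous)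
      (hpc _ hperc0 _ hp3)
  have e2 : ∫ θ in (0:ℝ)..(2*π), c1 θ * deriv (deriv (deriv u)) θ
      = - ∫ θ in (0:ℝ)..(2*π), c2 θ * deriv (deriv u) θ :=
    aux_ibp hdc1 hdu2 hcc2 (hu3.continuous) (hpc _ hperc1 _ hp2)
  have e3 : ∫ θ in (0:ℝ)..(2*π), c2 θ * deriv (deriv u) θ
      = - ∫ θ in (0:ℝ)..(2*π), c3 θ * deriv u θ :=
    aux_ibp hdc2 hdu1 hcc3 (hu2.continuous) (hpc _ hperc2 _ hp1)
  have e4 : ∫ θ in (0:ℝ)..(2*π), c3 θ * deriv u θ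
      = - ∫ θ in (0:ℝ)..(2*π), c4 θ * u θ :=
    aux_ibp hdc3 hdu hcc4 (hu1.continuous) (hpc _ hperc3 _ hper)
  have e2' : ∫ θ in (0:ℝ)..(2*π), c0 θ * deriv (deriv u) θ
      = - ∫ θ in (0:ℝ)..(2*π), c1 θ * deriv u θ :=
    aux_ibp hdc0 hdu1 hcc1 (hu2.continuous) (hpc _ hperc0 _ hp1)
  have e2'' : ∫ θ in (0:ℝ)..(2*π), c1 θ * deriv u θ
      = - ∫ θ in (0:ℝ)..(2*π), c2 θ * u θ :=
    aux_ibp hdc1 hdu hcc2 (hu1.continuous) (hpc _ hperc1 _ hper)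
  -- rewrite the integrand
  have hcos3 : ∀ θ : ℝ, Real.cos (θ+α)^3 = c0 θ := by
    intro θ
    have := Real.cos_three_mul (θ+α)
    simp only [hc0def]
    linarith [this]
  have hucont : Continuous u := hu.continuous
  have hu4cont : Continuous (deriv (deriv (deriv (deriv u)))) :=
    (Dstep _ hu3).continuous
  have hI24 : ∀ θ, iteratedDeriv 4 u θ = deriv (deriv (deriv (deriv u))) θ ∧
      iteratedDeriv 2 u θ = deriv (deriv u) θ := by
    intro θ
    constructor <;> simp [iteratedDeriv_succ, iteratedDeriv_zero]
  rw [intervalIntegral.integral_congr (g := fun θ =>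
      c0 θ * deriv (deriv (deriv (deriv u))) θ + ((10:ℝ) * (c0 θ * deriv (deriv u) θ)
        + (9:ℝ) * (c0 θ * u θ)))
    (by
      intro θ _
      simp only [hcos3 θ, (hI24 θ).1, (hI24 θ).2]
      ring)]
  rw [intervalIntegral.integral_add (f := fun θ => c0 θ * deriv (deriv (deriv (deriv u))) θ)
      (g := fun θ => (10:ℝ) * (c0 θ * deriv (deriv u) θ) + (9:ℝ) * (c0 θ * u θ)) ((hcc0.mul hu4cont).intervalIntegrable _ _)
      (((continuous_const.mul (hcc0.mul hu2.continuous)).add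
        (continuous_const.mul (hcc0.mul hucont))).intervalIntegrable _ _),
    intervalIntegral.integral_add (f := fun θ => (10:ℝ) * (c0 θ * deriv (deriv u) θ))
      (g := fun θ => (9:ℝ) * (c0 θ * u θ))
      ((continuous_const.mul (hcc0.mul hu2.continuous)).intervalIntegrable _ _)
      ((continuous_const.mul (hcc0.mul hucont)).intervalIntegrable _ _),
    intervalIntegral.integral_const_mul, intervalIntegral.integral_const_mul]
  rw [e1, e2, e3, e4, e2', e2'']
  -- now everything is an integral against u: combine
  have hc4eq : ∀ θ, c4 θ * u θ = (-10:ℝ) * (c2 θ * u θ) + (-9:ℝ) * (c0 θ * u θ) := by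
    intro θ
    simp only [hc0def, hc2def, hc4def]
    ring
  rw [intervalIntegral.integral_congr (g := fun θ =>
      (-10:ℝ) * (c2 θ * u θ) + (-9:ℝ) * (c0 θ * u θ)) (fun θ _ => hc4eq θ)]
  rw [intervalIntegral.integral_add (f := fun θ => (-10:ℝ) * (c2 θ * u θ))
      (g := fun θ => (-9:ℝ) * (c0 θ * u θ)) ((continuous_const.mul (hcc2.mul hucont)).intervalIntegrable _ _)
      ((continuous_const.mul (hcc0.mul hucont)).intervalIntegrable _ _),
    intervalIntegral.integral_const_mul, intervalIntegral.integral_const_mul]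
  ring
/-- along the (normalized) 1-Q flow, the orthogonality condition
`∫ cos³(θ+α) v^{-5/3} dθ = 0` is preserved in time. -/
theorem stmt16 (v : ℝ → ℝ → ℝ)
    (hsmooth : ContDiff ℝ (⊤ : ℕ∞) (fun p : ℝ × ℝ => v p.1 p.2))
    (hper : ∀ t θ, v t (θ + 2 * Real.pi) = v t θ)
    (hpos : ∀ t θ, 0 < v t θ)
    (Q : ℝ → ℝ → ℝ)
    (hQ : ∀ t θ, Q t θ = (1/9) * v t θ ^ ((5:ℝ)/3) *
        (iteratedDeriv 4 (v t) θ + 10 * iteratedDeriv 2 (v t) θ + 9 * v t θ))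
    (Qbar : ℝ → ℝ)
    (hQbar : ∀ t, Qbar t =
        (∫ θ in (0:ℝ)..(2 * Real.pi), Q t θ * v t θ ^ (-(2:ℝ)/3)) /
          (∫ θ in (0:ℝ)..(2 * Real.pi), v t θ ^ (-(2:ℝ)/3)))
    (hflow : ∀ t, 0 ≤ t → ∀ θ,
        HasDerivAt (fun s => v s θ) (-(3/4) * (Q t θ - Qbar t) * v t θ) t)
    (hinit : ∀ α ∈ Set.Ico 0 (2 * Real.pi),
        (∫ θ in (0:ℝ)..(2 * Real.pi),
          Real.cos (θ + α)^3 * v 0 θ ^ (-(5:ℝ)/3)) = 0) :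
    ∀ t, 0 ≤ t → ∀ α ∈ Set.Ico 0 (2 * Real.pi),
      (∫ θ in (0:ℝ)..(2 * Real.pi),
        Real.cos (θ + α)^3 * v t θ ^ (-(5:ℝ)/3)) = 0 := by
  have hvcont : Continuous (fun p : ℝ × ℝ => v p.1 p.2) := hsmooth.continuous
  have hvt : ∀ t, ContDiff ℝ (⊤ : ℕ∞) (v t) := fun t =>
    hsmooth.comp ((contDiff_const : ContDiff ℝ (⊤ : ℕ∞) (fun _ : ℝ => t)).prodMk contDiff_id)
  have hv53 : Continuous (fun p : ℝ × ℝ => v p.1 p.2 ^ (-(5:ℝ)/3)) :=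
    hvcont.rpow_const (fun p => Or.inl (hpos p.1 p.2).ne')
  have hv23 : Continuous (fun p : ℝ × ℝ => v p.1 p.2 ^ (-(2:ℝ)/3)) :=
    hvcont.rpow_const (fun p => Or.inl (hpos p.1 p.2).ne')
  have hQc : Continuous (fun p : ℝ × ℝ => Q p.1 p.2) := by
    have h4 := (aux_iter_smooth 4 v hsmooth).continuous
    have h2 := (aux_iter_smooth 2 v hsmooth).continuous
    have heq : (fun p : ℝ × ℝ => Q p.1 p.2)
        = fun p : ℝ × ℝ => (1/9) * v p.1 p.2 ^ ((5:ℝ)/3) *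
          (iteratedDeriv 4 (v p.1) p.2 + 10 * iteratedDeriv 2 (v p.1) p.2 + 9 * v p.1 p.2) := by
      funext p; exact hQ p.1 p.2
    rw [heq]
    exact (continuous_const.mul
        (hvcont.rpow_const fun p => Or.inl (hpos p.1 p.2).ne')).mul
      ((h4.add (continuous_const.mul h2)).add (continuous_const.mul hvcont))
  have hQtc : ∀ t, Continuous (Q t) := fun t =>
    hQc.comp (continuous_const.prodMk continuous_id)
  have hv53t : ∀ t, Continuous (fun θ => v t θ ^ (-(5:ℝ)/3)) := fun t =>
    hv53.comp (continuous_const.prodMk continuous_id)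
  have hv23t : ∀ t, Continuous (fun θ => v t θ ^ (-(2:ℝ)/3)) := fun t =>
    hv23.comp (continuous_const.prodMk continuous_id)
  -- continuity of Qbar
  have hNum : Continuous (fun t => ∫ θ in (0:ℝ)..(2*π), Q t θ * v t θ ^ (-(2:ℝ)/3)) := by
    apply intervalIntegral.continuous_parametric_intervalIntegral_of_continuous'
      (f := fun t θ => Q t θ * v t θ ^ (-(2:ℝ)/3))
    exact hQc.mul hv23
  have hDen : Continuous (fun t => ∫ θ in (0:ℝ)..(2*π), v t θ ^ (-(2:ℝ)/3)) := by
    apply intervalIntegral.continuous_parametric_intervalIntegral_of_continuous'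
      (f := fun t θ => v t θ ^ (-(2:ℝ)/3))
    exact hv23
  have hDpos : ∀ t, 0 < ∫ θ in (0:ℝ)..(2*π), v t θ ^ (-(2:ℝ)/3) := by
    intro t
    apply intervalIntegral.intervalIntegral_pos_of_pos
      ((hv23t t).intervalIntegrable _ _)
      (fun x => Real.rpow_pos_of_pos (hpos t x) _) Real.two_pi_pos
  have hQbarc : Continuous Qbar := by
    have heq : Qbar = fun t =>
        (∫ θ in (0:ℝ)..(2*π), Q t θ * v t θ ^ (-(2:ℝ)/3)) /
          (∫ θ in (0:ℝ)..(2*π), v t θ ^ (-(2:ℝ)/3)) := funext hQbar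
    rw [heq]
    exact hNum.div hDen (fun t => (hDpos t).ne')
  -- Kazdan-Warner type identity
  have hKW : ∀ t α', (∫ θ in (0:ℝ)..(2*π),
      Real.cos (θ+α')^3 * (Q t θ * v t θ ^ (-(5:ℝ)/3))) = 0 := by
    intro t α'
    have heq : ∀ θ ∈ Set.uIcc (0:ℝ) (2*π),
        (fun θ => Real.cos (θ+α')^3 * (Q t θ * v t θ ^ (-(5:ℝ)/3))) θ =
        (fun θ => (1/9) * (Real.cos (θ+α')^3 *
          (iteratedDeriv 4 (v t) θ + 10 * iteratedDeriv 2 (v t) θ + 9 * v t θ))) θ := by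
      intro θ _
      have h1 : v t θ ^ ((5:ℝ)/3) * v t θ ^ (-(5:ℝ)/3) = 1 := by
        rw [← Real.rpow_add (hpos t θ)]; norm_num
      simp only
      rw [hQ]
      linear_combination (Real.cos (θ+α')^3 * (1/9) *
        (iteratedDeriv 4 (v t) θ + 10 * iteratedDeriv 2 (v t) θ + 9 * v t θ)) * h1
    rw [intervalIntegral.integral_congr heq, intervalIntegral.integral_const_mul,
      aux_keyzero (hvt t) (hper t) α', mul_zero]
  -- main argument
  intro T hT α hα
  rcases eq_or_lt_of_le hT with h0 | hTpos
  · rw [← h0]; exact hinit α hα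
  set f : ℝ → ℝ := fun t => ∫ θ in (0:ℝ)..(2*π), Real.cos (θ+α)^3 * v t θ ^ (-(5:ℝ)/3)
    with hfdef
  have hcosc : Continuous (fun θ : ℝ => Real.cos (θ+α)^3) := by fun_prop
  have hfc : Continuous f := by
    apply intervalIntegral.continuous_parametric_intervalIntegral_of_continuous'
      (f := fun t θ => Real.cos (θ+α)^3 * v t θ ^ (-(5:ℝ)/3))
    exact (hcosc.comp continuous_snd).mul hv53
  -- the derivative of f for t > 0
  have hderiv : ∀ t₀, 0 < t₀ → HasDerivAt f (-(5/4) * Qbar t₀ * f t₀) t₀ := by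
    intro t₀ ht₀
    set F' : ℝ → ℝ → ℝ := fun t θ =>
      Real.cos (θ+α)^3 * ((5/4) * (Q t θ - Qbar t) * v t θ ^ (-(5:ℝ)/3)) with hF'def
    have hF'c : Continuous (fun p : ℝ × ℝ => F' p.1 p.2) :=
      ((hcosc.comp continuous_snd).mul
        ((continuous_const.mul (hQc.sub (hQbarc.comp continuous_fst))).mul hv53))
    obtain ⟨C, hC⟩ := (IsCompact.prod isCompact_Icc isCompact_Icc :
        IsCompact (Set.Icc (t₀/2) (2*t₀) ×ˢ Set.Icc (0:ℝ) (2*π))).exists_bound_of_continuousOn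
      hF'c.continuousOn
    have hball : ∀ t ∈ Metric.ball t₀ (t₀/2), t ∈ Set.Icc (t₀/2) (2*t₀) := by
      intro t ht
      rw [Metric.mem_ball, Real.dist_eq, abs_lt] at ht
      constructor <;> linarith [ht.1, ht.2]
    have hIoc : ∀ θ : ℝ, θ ∈ Set.uIoc (0:ℝ) (2*π) → θ ∈ Set.Icc (0:ℝ) (2*π) := by
      intro θ hθ
      rw [Set.uIoc_of_le Real.two_pi_pos.le] at hθ
      exact Set.Ioc_subset_Icc_self hθ
    have key := intervalIntegral.hasDerivAt_integral_of_dominated_loc_of_deriv_le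
      (F := fun t θ => Real.cos (θ+α)^3 * v t θ ^ (-(5:ℝ)/3)) (F' := F') (x₀ := t₀)
      (a := 0) (b := 2*π) (μ := volume) (bound := fun _ => C) (Metric.ball_mem_nhds t₀ (half_pos ht₀))
      (Filter.Eventually.of_forall fun t =>
        ((hcosc.mul (hv53t t)).aestronglyMeasurable))
      (((hcosc.mul (hv53t t₀))).intervalIntegrable _ _)
      ((hcosc.mul
        ((continuous_const.mul ((hQtc t₀).sub continuous_const)).mul
          (hv53t t₀))).aestronglyMeasurable)
      (Filter.Eventually.of_forall fun θ hθ t ht =>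
        hC (t, θ) (Set.mem_prod.mpr ⟨hball t ht, hIoc θ hθ⟩))
      (continuous_const.intervalIntegrable _ _)
      (Filter.Eventually.of_forall fun θ hθ t ht => by
        have ht0 : (0:ℝ) ≤ t := le_of_lt (lt_of_lt_of_le (half_pos ht₀) (hball t ht).1)
        have hv := hflow t ht0 θ
        have h1 := hv.rpow_const (p := -(5:ℝ)/3) (Or.inl (hpos t θ).ne')
        have h2 := h1.const_mul (Real.cos (θ+α)^3)
        refine h2.congr_deriv ?_
        have h3 : v t θ * v t θ ^ (-(5:ℝ)/3 - 1) = v t θ ^ (-(5:ℝ)/3) := by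
          have h4 := Real.rpow_add (hpos t θ) 1 (-(5:ℝ)/3 - 1)
          rw [Real.rpow_one] at h4
          rw [← h4]; norm_num
        simp only [hF'def]
        linear_combination (Real.cos (θ+α)^3 * (5/4) * (Q t θ - Qbar t)) * h3)
    have hd := key.2
    have hint : (∫ θ in (0:ℝ)..(2*π), F' t₀ θ) = -(5/4) * Qbar t₀ * f t₀ := by
      have heq : ∀ θ ∈ Set.uIcc (0:ℝ) (2*π), F' t₀ θ =
          (5/4) * (Real.cos (θ+α)^3 * (Q t₀ θ * v t₀ θ ^ (-(5:ℝ)/3)))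
          - ((5/4) * Qbar t₀) * (Real.cos (θ+α)^3 * v t₀ θ ^ (-(5:ℝ)/3)) := by
        intro θ _
        simp only [hF'def]
        ring
      rw [intervalIntegral.integral_congr heq,
        intervalIntegral.integral_sub
          (f := fun θ => (5/4) * (Real.cos (θ+α)^3 * (Q t₀ θ * v t₀ θ ^ (-(5:ℝ)/3))))
          (g := fun θ => ((5/4) * Qbar t₀) * (Real.cos (θ+α)^3 * v t₀ θ ^ (-(5:ℝ)/3)))
          ((continuous_const.mul (hcosc.mul ((hQtc t₀).mul (hv53t t₀)))).intervalIntegrable _ _)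
          ((continuous_const.mul (hcosc.mul (hv53t t₀))).intervalIntegrable _ _),
        intervalIntegral.integral_const_mul, intervalIntegral.integral_const_mul,
        hKW t₀ α, mul_zero, zero_sub]
      simp only [hfdef]
      ring
    rw [hint] at hd
    exact hd
  -- Gronwall wrap-up
  obtain ⟨K, hK⟩ := (isCompact_Icc : IsCompact (Set.Icc (0:ℝ) T)).exists_bound_of_continuousOn
    ((continuous_const.mul hQbarc) :
      Continuous (fun t => -(5/4) * Qbar t)).continuousOn
  have hK0 : 0 ≤ K := le_trans (norm_nonneg _) (hK 0 (Set.left_mem_Icc.mpr hT))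
  have main : ∀ a ∈ Set.Ioc (0:ℝ) T, ‖f T‖ ≤ ‖f a‖ * Real.exp (K * T) := by
    intro a ha
    have hg := norm_le_gronwallBound_of_norm_deriv_right_le (f := f)
      (f' := fun t => -(5/4) * Qbar t * f t) (δ := ‖f a‖) (K := K) (ε := 0)
      (a := a) (b := T) (hfc.continuousOn)
      (fun x hx => (hderiv x (lt_of_lt_of_le ha.1 hx.1)).hasDerivWithinAt)
      le_rfl
      (fun x hx => by
        rw [norm_mul, add_zero]
        exact mul_le_mul_of_nonneg_right
          (hK x ⟨le_trans ha.1.le hx.1, hx.2.le⟩) (norm_nonneg _))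
      T (Set.right_mem_Icc.mpr ha.2)
    rw [gronwallBound_ε0] at hg
    calc ‖f T‖ ≤ ‖f a‖ * Real.exp (K * (T - a)) := hg
      _ ≤ ‖f a‖ * Real.exp (K * T) := by
          apply mul_le_mul_of_nonneg_left _ (norm_nonneg _)
          apply Real.exp_le_exp.mpr
          nlinarith [ha.1, hK0]
  have hf0 : f 0 = 0 := hinit α hα
  have hlim : Filter.Tendsto (fun a => ‖f a‖ * Real.exp (K*T)) (nhdsWithin 0 (Set.Ioi 0))
      (nhds 0) := by
    have h1 : Filter.Tendsto (fun a => ‖f a‖ * Real.exp (K*T)) (nhds 0)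
        (nhds (‖f 0‖ * Real.exp (K*T))) := ((hfc.norm).mul continuous_const).tendsto 0
    rw [hf0, norm_zero, zero_mul] at h1
    exact h1.mono_left nhdsWithin_le_nhds
  have hev : ∀ᶠ a in nhdsWithin 0 (Set.Ioi 0), ‖f T‖ ≤ ‖f a‖ * Real.exp (K*T) := by
    filter_upwards [Ioc_mem_nhdsGT_of_mem (Set.left_mem_Ico.mpr hTpos)] with a ha
      using main a ha
  have hle : ‖f T‖ ≤ 0 := ge_of_tendsto hlim hev
  have : ‖f T‖ = 0 := le_antisymm hle (norm_nonneg _)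
  exact norm_eq_zero.mp this
end

section
/- Let Q be a smooth 2π-periodic function with mean Q̄ and Fourier coefficients a_n, b_n (n ≥ 1). If a₁² + b₁² ≤ ε(Σ_{n≥1}n²(a_n²+b_n²)) for some ε with (20/3 + 1)ε < 8/3, then -(8/3)Σ n⁴(a_n²+b_n²) + (20/3 + ε)Σ n²(a_n²+b_n²) - (4-ε)Σ(a_n²+b_n²) ≤ -δ Σ(a_n²+b_n²) for some δ > 0 depending only on ε, provided ε is small enough. -/
open Real

/-- spectral gap estimate along the 4-Q flow.  Sums are over the
Fourier modes `n ≥ 1` of `Q`. -/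
theorem stmt19 :
    ∃ ε₀ : ℝ, 0 < ε₀ ∧ ∀ ε : ℝ, 0 < ε → ε ≤ ε₀ → (20/3 + 1) * ε < 8/3 →
      ∃ δ : ℝ, 0 < δ ∧ ∀ a b : ℕ → ℝ,
        Summable (fun n : ℕ => ((n:ℝ) + 1)^4 * ((a (n + 1))^2 + (b (n + 1))^2)) →
        ((a 1)^2 + (b 1)^2
            ≤ ε * ∑' n : ℕ, ((n:ℝ) + 1)^2 * ((a (n + 1))^2 + (b (n + 1))^2)) →
        -(8/3) * (∑' n : ℕ, ((n:ℝ) + 1)^4 * ((a (n + 1))^2 + (b (n + 1))^2))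
          + (20/3 + ε) * (∑' n : ℕ, ((n:ℝ) + 1)^2 * ((a (n + 1))^2 + (b (n + 1))^2))
          - (4 - ε) * (∑' n : ℕ, ((a (n + 1))^2 + (b (n + 1))^2))
        ≤ -δ * ∑' n : ℕ, ((a (n + 1))^2 + (b (n + 1))^2) := by
  refine ⟨1/4, by norm_num, fun ε hε hε0 _ => ⟨1/4, by norm_num, fun a b h4 h1 => ?_⟩⟩
  have hc : ∀ n : ℕ, (0:ℝ) ≤ (a (n+1))^2 + (b (n+1))^2 := fun n => by positivity
  have ht : ∀ n : ℕ, (1:ℝ) ≤ ((n:ℝ)+1) := fun n => by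
    have := Nat.cast_nonneg (α := ℝ) n; linarith
  -- summability of the lower-weight sums
  have hp24 : ∀ n : ℕ, ((n:ℝ) + 1)^2 ≤ ((n:ℝ) + 1)^4 := fun n =>
    pow_le_pow_right₀ (ht n) (by norm_num)
  have hp2 : ∀ n : ℕ, (1:ℝ) ≤ ((n:ℝ) + 1)^2 := fun n =>
    by nlinarith [ht n]
  have h2 : Summable (fun n : ℕ => ((n:ℝ) + 1)^2 * ((a (n + 1))^2 + (b (n + 1))^2)) := by
    refine h4.of_nonneg_of_le (fun n => by positivity) (fun n =>
      mul_le_mul_of_nonneg_right (hp24 n) (hc n))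
  have h0 : Summable (fun n : ℕ => ((a (n + 1))^2 + (b (n + 1))^2)) := by
    refine h2.of_nonneg_of_le (fun n => hc n) (fun n =>
      le_mul_of_one_le_left (hc n) (hp2 n))
  set A := ∑' n : ℕ, ((n:ℝ) + 1)^4 * ((a (n + 1))^2 + (b (n + 1))^2) with hA
  set B := ∑' n : ℕ, ((n:ℝ) + 1)^2 * ((a (n + 1))^2 + (b (n + 1))^2) with hB
  set C := ∑' n : ℕ, ((a (n + 1))^2 + (b (n + 1))^2) with hC
  have hC0 : 0 ≤ C := tsum_nonneg hc
  have hCB : C ≤ B := by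
    exact Summable.tsum_le_tsum (fun n => le_mul_of_one_le_left (hc n) (hp2 n)) h0 h2
  have hB0 : 0 ≤ B := le_trans hC0 hCB
  -- the auxiliary series
  have hite : Summable (fun n : ℕ => if n = 0 then (a 1)^2 + (b 1)^2 else 0) :=
    (hasSum_ite_eq 0 ((a 1)^2 + (b 1)^2)).summable
  have hg : Summable (fun n : ℕ =>
      ((8/3) * (((n:ℝ) + 1)^4 * ((a (n + 1))^2 + (b (n + 1))^2))
        - (20/3) * (((n:ℝ) + 1)^2 * ((a (n + 1))^2 + (b (n + 1))^2)))
      + ((4 * ((a (n + 1))^2 + (b (n + 1))^2))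
        + (if n = 0 then (a 1)^2 + (b 1)^2 else 0))) :=
    ((h4.mul_left _).sub (h2.mul_left _)).add ((h0.mul_left _).add hite)
  have key : B ≤ (8/3) * A - (20/3) * B + 4 * C + ((a 1)^2 + (b 1)^2) := by
    have hle : ∀ n : ℕ, ((n:ℝ) + 1)^2 * ((a (n + 1))^2 + (b (n + 1))^2) ≤
        ((8/3) * (((n:ℝ) + 1)^4 * ((a (n + 1))^2 + (b (n + 1))^2))
          - (20/3) * (((n:ℝ) + 1)^2 * ((a (n + 1))^2 + (b (n + 1))^2)))
        + ((4 * ((a (n + 1))^2 + (b (n + 1))^2))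
          + (if n = 0 then (a 1)^2 + (b 1)^2 else 0)) := by
      intro n
      cases n with
      | zero => simp; ring_nf; nlinarith [hc 0]
      | succ m =>
        rw [if_neg (Nat.succ_ne_zero m)]
        set T : ℝ := ((m + 1 : ℕ) : ℝ) + 1 with hT
        have hT2 : (2:ℝ) ≤ T := by
          have := Nat.cast_nonneg (α := ℝ) m
          simp only [hT, Nat.cast_add, Nat.cast_one]
          linarith
        clear_value T
        have hpoly : (0:ℝ) ≤ 8*T^4 - 23*T^2 + 12 := by
          nlinarith [sq_nonneg (T^2 - 4), sq_nonneg T, hT2]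
        have hcm := hc (m + 1)
        nlinarith [mul_nonneg hpoly hcm]
    have := Summable.tsum_le_tsum hle h2 hg
    calc B ≤ _ := this
      _ = (8/3) * A - (20/3) * B + 4 * C + ((a 1)^2 + (b 1)^2) := by
        rw [Summable.tsum_add ((h4.mul_left _).sub (h2.mul_left _)) ((h0.mul_left _).add hite),
          Summable.tsum_sub (h4.mul_left _) (h2.mul_left _),
          Summable.tsum_add (h0.mul_left _) hite,
          tsum_mul_left, tsum_mul_left, tsum_mul_left, tsum_ite_eq]
        rw [← hA, ← hB, ← hC]
        ring
  -- combine
  have hεCB : ε * C ≤ ε * B := mul_le_mul_of_nonneg_left hCB hε.le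
  have hεB : ε * B ≤ (1/4) * B := mul_le_mul_of_nonneg_right hε0 hB0
  linarith [key, h1, hεCB, hεB, hCB, hC0]
end
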